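/- Let b ≥ 2 be an integer and d ≥ 1. For all k_1,…,k_d ∈ ℕ₀ and all x_1,…,x_d ∈ [0,1), wal_{𝒟_d(k_1,…,k_d)}(𝒟_d(x_1,…,x_d)) = ∏_{i=1}^d wal_{k_i}(x_i). -/

import Mathlib

open MeasureTheory Set

noncomputable section

namespace Paper

/-- The `i`-th base-`b` digit of `x ∈ [0,1)` (for `i ≥ 1`), using the expansion in which
infinitely many digits differ from `b-1` (i.e. the floor-based expansion). -/
def bdigit (b : ℕ) (x : ℝ) (i : ℕ) : ℕ := (⌊x * (b : ℝ) ^ i⌋).toNat % b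

/-- A `b`-adic rational in `[0,1)`: a number with a finite base-`b` expansion. -/
def IsBadicRational (b : ℕ) (x : ℝ) : Prop := ∃ (n k : ℕ), x = (n : ℝ) / (b : ℝ) ^ k

/-- The `k`-th Walsh function in base `b`. -/
def wal (b k : ℕ) (x : ℝ) : ℂ :=
  Complex.exp (2 * Real.pi * Complex.I / b) ^
    (∑ j ∈ Finset.range k, bdigit b x (j + 1) * (k / b ^ j % b))

/-- The multidimensional Walsh function. -/
def walV (b s : ℕ) (k : Fin s → ℕ) (x : Fin s → ℝ) : ℂ := ∏ j, wal b (k j) (x j)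

/-- Digitwise addition modulo `b` of nonnegative integers. -/
def baddN (b k l : ℕ) : ℕ :=
  ∑ j ∈ Finset.range (k + l), ((k / b ^ j % b + l / b ^ j % b) % b) * b ^ j

/-- Digitwise addition modulo `b` on `[0,1)`. -/
def baddR (b : ℕ) (x y : ℝ) : ℝ :=
  ∑' i : ℕ, (((bdigit b x (i + 1) + bdigit b y (i + 1)) % b : ℕ) : ℝ) / (b : ℝ) ^ (i + 1)

/-- Digitwise subtraction modulo `b` on `[0,1)`. -/
def bsubR (b : ℕ) (x y : ℝ) : ℝ :=
  ∑' i : ℕ, (((bdigit b x (i + 1) + (b - bdigit b y (i + 1))) % b : ℕ) : ℝ) / (b : ℝ) ^ (i + 1)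

/-- The unit box `[0,1)^s`. -/
def unitBox (s : ℕ) : Set (Fin s → ℝ) := Set.univ.pi fun _ => Set.Ico (0 : ℝ) 1

/-- The closed unit cube `[0,1]^s`. -/
def unitCube (s : ℕ) : Set (Fin s → ℝ) := Set.univ.pi fun _ => Set.Icc (0 : ℝ) 1

/-- The digit interlacing function `𝒟_d : [0,1)^d → [0,1)`. -/
def interlaceR (b d : ℕ) (x : Fin d → ℝ) : ℝ :=
  ∑' a : ℕ, ∑ r : Fin d, (bdigit b (x r) (a + 1) : ℝ) / (b : ℝ) ^ ((r : ℕ) + 1 + a * d)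

/-- The digit interlacing function on nonnegative integers. -/
def interlaceN (b d : ℕ) (k : Fin d → ℕ) : ℕ :=
  ∑ r : Fin d, ∑ a ∈ Finset.range (k r), (k r / b ^ a % b) * b ^ ((r : ℕ) + a * d)

/-- The index of position `r` of block `i` inside `Fin (d*s)`. -/
def embIdx (d s : ℕ) (i : Fin s) (r : Fin d) : Fin (d * s) :=
  ⟨(i : ℕ) * d + (r : ℕ), by
    calc (i : ℕ) * d + (r : ℕ) < (i : ℕ) * d + d := by have := r.2; omega
      _ = ((i : ℕ) + 1) * d := (Nat.succ_mul _ _).symm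
      _ ≤ s * d := Nat.mul_le_mul_right d i.2
      _ = d * s := Nat.mul_comm s d⟩

/-- Blockwise digit interlacing `𝒟_d : [0,1)^{ds} → [0,1)^s`. -/
def interlaceB (b d s : ℕ) (x : Fin (d * s) → ℝ) : Fin s → ℝ :=
  fun i => interlaceR b d fun r => x (embIdx d s i r)

/-- Blockwise digit interlacing on integer vectors, `ℕ₀^{ds} → ℕ₀^s`. -/
def interlaceBN (b d s : ℕ) (k : Fin (d * s) → ℕ) : Fin s → ℕ :=
  fun i => interlaceN b d fun r => k (embIdx d s i r)

/-- `P` is a `(t,m,s)`-net in base `b`. -/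
def IsNet (b m s t : ℕ) (P : Fin (b ^ m) → Fin s → ℝ) : Prop :=
  ∀ dv : Fin s → ℕ, ∑ i, dv i ≤ m - t →
    ∀ av : Fin s → ℕ, (∀ i, av i < b ^ dv i) →
      (Finset.univ.filter fun n =>
        ∀ i, P n i ∈ Set.Ico ((av i : ℝ) / (b : ℝ) ^ dv i) (((av i : ℝ) + 1) / (b : ℝ) ^ dv i)).card
        = b ^ (m - ∑ i, dv i)

/-- `P` is a digital net over `ℤ_b` generated by `m × m` matrices `C_1, …, C_s`. -/
def IsDigitalNet (b m s : ℕ) (P : Fin (b ^ m) → Fin s → ℝ) : Prop :=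
  ∃ C : Fin s → Matrix (Fin m) (Fin m) (ZMod b),
    ∀ n : Fin (b ^ m), ∀ i : Fin s,
      P n i = ∑ j : Fin m,
        (((C i).mulVec fun r : Fin m => (((n : ℕ) / b ^ (r : ℕ) % b : ℕ) : ZMod b)) j).val
          / (b : ℝ) ^ ((j : ℕ) + 1)

/-- One-dimensional finite difference `Δ_α(x; z_1,…,z_α) f`. -/
def fdiff (f : ℝ → ℝ) (α : ℕ) (x : ℝ) (z : Fin α → ℝ) : ℝ :=
  ∑ v : Finset (Fin α), (-1 : ℝ) ^ v.card * f (x + ∑ i ∈ v, z i)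

/-- Multidimensional finite difference `Δ_𝛂(x; z_1,…,z_s) f`. -/
def fdiffV (s : ℕ) (f : (Fin s → ℝ) → ℝ) (αv : Fin s → ℕ) (x : Fin s → ℝ)
    (z : (i : Fin s) → Fin (αv i) → ℝ) : ℝ :=
  ∑ v : (i : Fin s) → Finset (Fin (αv i)),
    (-1 : ℝ) ^ (∑ i, (v i).card) * f fun i => x i + ∑ r ∈ v i, z i r

/-- Apply a permutation of `{0,…,b-1}` to a natural number `< b`. -/
def applyPerm (b : ℕ) (π : Equiv.Perm (Fin b)) (n : ℕ) : ℕ :=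
  if h : n < b then (π ⟨n, h⟩ : Fin b) else n

/-- The list of the first `k` base-`b` digits of `x`. -/
def digitList (b : ℕ) (x : ℝ) (k : ℕ) : List ℕ :=
  (List.range k).map fun j => bdigit b x (j + 1)

/-- Owen's scrambling of `x ∈ [0,1)` by the family `F` of permutations (indexed by
digit prefixes): the `k`-th digit `ξ_k` is replaced by `π_{ξ_1,…,ξ_{k-1}}(ξ_k)`. -/
def scrambleR (b : ℕ) (F : List ℕ → Equiv.Perm (Fin b)) (x : ℝ) : ℝ :=
  ∑' k : ℕ, (applyPerm b (F (digitList b x k)) (bdigit b x (k + 1)) : ℝ) / (b : ℝ) ^ (k + 1)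

/-- `sc` is a random Owen scrambling: a random family of permutations of `{0,…,b-1}`,
one for each of the `D` coordinates and each digit prefix, all chosen independently
and uniformly at random. -/
def IsUniformScrambling {Ω : Type*} [MeasurableSpace Ω] (μ : Measure Ω) (b D : ℕ)
    (sc : Ω → Fin D → List ℕ → Equiv.Perm (Fin b)) : Prop :=
  letI : MeasurableSpace (Equiv.Perm (Fin b)) := ⊤
  (∀ i l, Measurable fun ω => sc ω i l) ∧
    ProbabilityTheory.iIndepFun (m := fun _ : Fin D × List ℕ => (⊤ : MeasurableSpace (Equiv.Perm (Fin b))))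
      (fun p : Fin D × List ℕ => fun ω => sc ω p.1 p.2) μ ∧
    ∀ i l π, μ {ω | sc ω i l = π} = ((b.factorial : ENNReal))⁻¹

/-- `k` belongs to the digit box determined by `l`: `⌊b^{l-1}⌋ ≤ k < b^l`. -/
def inBl (b l k : ℕ) : Prop := b ^ l / b ≤ k ∧ k < b ^ l

/-- `k_r`: the part of `k` supported on base-`b` digits at positions `≡ r (mod d)`. -/
def kpart (b d k r : ℕ) : ℕ :=
  ∑ j ∈ Finset.range k, if j % d = r then (k / b ^ j % b) * b ^ j else 0

/-- The digits of `x` and `x'` in the arithmetic progression of positions `r, r+d, r+2d, …`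
(0-indexed; digit position `r + j·d` is the `(r+1+j·d)`-th digit) agree for `j' < j` and
differ at `j`; i.e. `β_r + 1 = j`. -/
def firstDiffAt (b d : ℕ) (x x' : ℝ) (r j : ℕ) : Prop :=
  (∀ j' < j, bdigit b x (r + 1 + j' * d) = bdigit b x' (r + 1 + j' * d)) ∧
    bdigit b x (r + 1 + j * d) ≠ bdigit b x' (r + 1 + j * d)

/-- The Walsh coefficient `f̂(k)` of `f : [0,1]^s → ℝ`. -/
def fhat (b s : ℕ) (f : (Fin s → ℝ) → ℝ) (k : Fin s → ℕ) : ℂ :=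
  ∫ x in unitBox s, (f x : ℂ) * (starRingEnd ℂ) (walV b s k x)

/-- `σ²_{d,ℓ,s}(f) = Σ_{k ∈ B_{d,ℓ,s}} |f̂(𝒟_d(k))|²`. -/
def sigmaSq (b d s : ℕ) (ℓ : Fin (d * s) → ℕ) (f : (Fin s → ℝ) → ℝ) : ℝ :=
  ∑ k ∈ Fintype.piFinset (fun j => Finset.Ico (b ^ ℓ j / b) (b ^ ℓ j)),
    ‖fhat b s f (interlaceBN b d s k)‖ ^ 2

/-- The gain coefficient `Γ_{d,ℓ}(P)` of order `d`, computed with a representative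
`k ∈ B_{d,ℓ,s}`, for a scrambling family `sc` and a left inverse `Dinv1` of `𝒟_d`. -/
def gainCoef {Ω : Type*} [MeasurableSpace Ω] (μ : Measure Ω) (b d s m : ℕ)
    (sc : Ω → Fin (d * s) → List ℕ → Equiv.Perm (Fin b))
    (Dinv1 : ℝ → Fin d → ℝ) (P : Fin (b ^ m) → Fin s → ℝ) (k : Fin (d * s) → ℕ) : ℂ :=
  (b : ℂ) ^ (-(2 * m : ℤ)) * ∑ n : Fin (b ^ m), ∑ n' : Fin (b ^ m), ∏ i : Fin s,
    ∫ ω, (∏ r : Fin d, wal b (k (embIdx d s i r))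
            (scrambleR b (sc ω (embIdx d s i r)) (Dinv1 (P n i) r))) *
      (starRingEnd ℂ) (∏ r : Fin d, wal b (k (embIdx d s i r))
            (scrambleR b (sc ω (embIdx d s i r)) (Dinv1 (P n' i) r))) ∂μ

/-- The `b`-adic box `∏_i [a_i b^{-l_i}, (a_i+1) b^{-l_i})`. -/
def badicBox (b n : ℕ) (l a : Fin n → ℕ) : Set (Fin n → ℝ) :=
  Set.univ.pi fun i => Set.Ico ((a i : ℝ) / (b : ℝ) ^ l i) (((a i : ℝ) + 1) / (b : ℝ) ^ l i)

/-- A partition of `[0,1)^n` into `b`-adic boxes (each encoded by its pair `(l, a)`). -/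
def IsBadicPartition (b n : ℕ) (Part : Finset ((Fin n → ℕ) × (Fin n → ℕ))) : Prop :=
  (∀ p ∈ Part, ∀ i, 1 ≤ p.1 i ∧ p.2 i < b ^ p.1 i) ∧
    (∀ p ∈ Part, ∀ q ∈ Part, p ≠ q → Disjoint (badicBox b n p.1 p.2) (badicBox b n q.1 q.2)) ∧
    (⋃ p ∈ Part, badicBox b n p.1 p.2) = unitBox n

/-- The increment `z_{i,r} = τ b^{-α(l_i - 1) - r}` (with `r` one-indexed). -/
def zval (b α s : ℕ) (l : Fin (α * s) → ℕ) (τ : ℤ) (i r : ℕ) : ℝ :=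
  (τ : ℝ) * (b : ℝ) ^ (-(α : ℤ) * ((if h : i < α * s then (l ⟨i, h⟩ : ℤ) else 0) - 1) - ((r : ℤ) + 1))

/-- The inner supremum in the definition of the generalized Vitali variation. -/
def vitaliInner (b α s : ℕ) (αv : Fin s → ℕ) (f : (Fin s → ℝ) → ℝ)
    (l a : Fin (α * s) → ℕ) : ENNReal :=
  ⨆ (t : Fin s → ℝ) (τ : (i : Fin s) → Fin (αv i) → ℤ)
    (_ : t ∈ interlaceB b α s '' badicBox b (α * s) l a)
    (_ : ∀ i r, τ i r ≠ 0 ∧ 1 - (b : ℤ) ≤ τ i r ∧ τ i r ≤ (b : ℤ) - 1)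
    (_ : ∀ v : (i : Fin s) → Finset (Fin (αv i)),
      (fun i => t i + ∑ r ∈ v i, zval b α s l (τ i r) (i : ℕ) (r : ℕ)) ∈
        interlaceB b α s '' badicBox b (α * s) (fun i => l i - 1) (fun i => a i / b)),
    ENNReal.ofReal
      ((fdiffV s f αv t (fun i r => zval b α s l (τ i r) (i : ℕ) (r : ℕ)) /
        ∏ i, ∏ r : Fin (αv i), zval b α s l (τ i r) (i : ℕ) (r : ℕ)) ^ 2)

/-- The generalized Vitali variation `V^{(s)}_𝛂(f)`. -/
def vitaliVar (b α s : ℕ) (αv : Fin s → ℕ) (f : (Fin s → ℝ) → ℝ) : ENNReal :=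
  ⨆ (Part : Finset ((Fin (α * s) → ℕ) × (Fin (α * s) → ℕ))) (_ : IsBadicPartition b (α * s) Part),
    (∑ p ∈ Part, volume (interlaceB b α s '' badicBox b (α * s) p.1 p.2) *
      vitaliInner b α s αv f p.1 p.2) ^ (1 / 2 : ℝ)

/-- The marginal `f_u` of `f`, as a function of the coordinates in `u`
(listed in increasing order). -/
def marginal (s : ℕ) (u : Finset (Fin s)) (f : (Fin s → ℝ) → ℝ) (y : Fin u.card → ℝ) : ℝ :=
  ∫ x in unitBox s, f fun i => if h : i ∈ u then y ((u.orderIsoOfFin rfl).symm ⟨i, h⟩) else x i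

/-- The generalized Hardy–Krause variation `V_α(f)` of order `α`. -/
def hkVar (b α s : ℕ) (f : (Fin s → ℝ) → ℝ) : ENNReal :=
  (∑ u : Finset (Fin s),
    if u = ∅ then ENNReal.ofReal |∫ x in unitBox s, f x| ^ 2
    else ∑ αv ∈ Fintype.piFinset (fun _ : Fin u.card => Finset.Icc 1 α),
      vitaliVar b α u.card αv (marginal s u f) ^ 2) ^ (1 / 2 : ℝ)

/-- `K_i`: the indices of the `i`-th block where `ℓ` is positive. -/
def Kblock (d s : ℕ) (ℓ : Fin (d * s) → ℕ) (i : Fin s) : Finset (Fin (d * s)) :=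
  Finset.univ.filter fun j => 0 < ℓ j ∧ (j : ℕ) / d = (i : ℕ)

/-- `γ(ℓ) = ∏_i ∏_{j=1}^{α_i} γ_{i,j}`, the product over each block of the
`min(α,|K_i|)` smallest of the numbers `γ'_j = (b-1) b^{-j+(i-1)d-(l_j-1)d}`, `j ∈ K_i`. -/
def gammaEll (b d s α : ℕ) (ℓ : Fin (d * s) → ℕ) : ℝ :=
  ∏ i : Fin s,
    ((((Kblock d s ℓ i).image fun j : Fin (d * s) =>
        (b - 1 : ℝ) * (b : ℝ) ^ (-(((j : ℕ) % d : ℤ) + 1) - ((ℓ j : ℤ) - 1) * d)).sort (· ≤ ·)).take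
      (min α (Kblock d s ℓ i).card)).prod

end Paper

/-!
Both sides are `exp (2πi/b)` raised to a sum of digit products. The `j`-th base-`b` digit of
`𝒟_d(k)` is the `⌊j/d⌋`-th digit of `k_{j mod d}`, and the same holds for `𝒟_d(x)`: the
interlaced digit sequence is the expansion of `𝒟_d(x)` with infinitely many digits `≠ b - 1`,
because already the digits of each `x_r ∈ [0,1)` have this property. Grouping the exponent of
the left-hand side by `j mod d` splits it into the exponents of the factors on the right.
-/

namespace Real

variable {b : ℕ}

theorem ofDigits_lt_one (hb : 1 < b) {e : ℕ → Fin b} (h : ∃ i, (e i : ℕ) < b - 1) :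
    ofDigits e < 1 := by
  obtain ⟨i, hi⟩ := h
  rw [← ofDigits_const_last_eq_one' hb]
  refine Summable.tsum_lt_tsum (i := i) (fun j => ?_) ?_ summable_ofDigitsTerm
    summable_ofDigitsTerm
  · unfold ofDigitsTerm
    gcongr
    exact_mod_cast Nat.le_sub_one_of_lt (e j).2
  · unfold ofDigitsTerm
    gcongr

theorem exists_digits_lt_pred [NeZero b] (hb : 1 < b) {x : ℝ} (hx : x ∈ Ico 0 1) (N : ℕ) :
    ∃ i, N ≤ i ∧ (digits x b i : ℕ) < b - 1 := by
  by_contra! h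
  have htail : (fun i => digits x b (i + N)) = fun _ => ⟨b - 1, Nat.sub_one_lt_of_lt hb⟩ :=
    funext fun i => Fin.ext <|
      le_antisymm (Nat.le_sub_one_of_lt (Fin.isLt _)) (h (i + N) (Nat.le_add_left N i))
  have hx' := ofDigits_eq_sum_add_ofDigits (digits x b) N
  rw [ofDigits_digits hb hx, htail, ofDigits_const_last_eq_one' hb, mul_one] at hx'
  have hfloor : (b : ℝ) ^ N * x = ⌊(b : ℝ) ^ N * x⌋₊ + 1 := by
    rw [← ofDigits_digits_sum_eq hx N]
    nth_rewrite 1 [hx']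
    field_simp
  linarith [Nat.lt_floor_add_one ((b : ℝ) ^ N * x)]

theorem digits_ofDigits [NeZero b] (hb : 1 < b) (e : ℕ → Fin b)
    (he : ∀ N, ∃ i, N ≤ i ∧ (e i : ℕ) < b - 1) : digits (ofDigits e) b = e := by
  have hprefix : ∀ n, ∃ A : ℕ, (b : ℝ) ^ n * ∑ i ∈ Finset.range n, ofDigitsTerm e i = A := by
    intro n
    induction n with
    | zero => exact ⟨0, by simp⟩
    | succ n ih =>
      obtain ⟨A, hA⟩ := ih
      refine ⟨b * A + e n, ?_⟩
      rw [Finset.sum_range_succ, mul_add, pow_succ', mul_assoc, hA, ofDigitsTerm]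
      field_simp
      push_cast
      ring
  funext m
  obtain ⟨A, hA⟩ := hprefix m
  set tail := ofDigits fun i => e (i + (m + 1))
  have hsplit : ofDigits e * (b : ℝ) ^ (m + 1) = tail + (b * A + e m : ℕ) := by
    rw [ofDigits_eq_sum_add_ofDigits e (m + 1), Finset.sum_range_succ, Nat.cast_add,
      Nat.cast_mul, ← hA, ofDigitsTerm]
    field_simp
    ring
  have htail_lt : tail < 1 := by
    obtain ⟨i, hi, hlt⟩ := he (m + 1)
    exact ofDigits_lt_one hb ⟨i - (m + 1), by rwa [Nat.sub_add_cancel hi]⟩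
  apply Fin.ext
  rw [digits, Fin.val_ofNat, hsplit, Nat.floor_add_natCast (ofDigits_nonneg _),
    Nat.floor_eq_zero.mpr htail_lt, zero_add, Nat.mul_comm, Nat.mul_add_mod_of_lt (e m).2]

end Real

theorem Nat.sum_mul_pow_div_pow_mod {b : ℕ} (c : ℕ → ℕ) (hc : ∀ j, c j < b) (N m : ℕ) :
    (∑ j ∈ Finset.range N, c j * b ^ j) / b ^ m % b = if m < N then c m else 0 := by
  induction N generalizing c m with
  | zero => simp
  | succ N ih =>
    have hshift : ∑ j ∈ Finset.range (N + 1), c j * b ^ j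
        = b * ∑ j ∈ Finset.range N, c (j + 1) * b ^ j + c 0 := by
      rw [Finset.sum_range_succ', Finset.mul_sum]
      simp only [pow_succ, pow_zero, mul_one]
      congr 1
      exact Finset.sum_congr rfl fun j _ => by ring
    have hb : 0 < b := (Nat.zero_le _).trans_lt (hc 0)
    rw [hshift]
    cases m with
    | zero => simp [Nat.mul_comm b, Nat.mul_add_mod_of_lt (hc 0)]
    | succ m =>
      rw [pow_succ', ← Nat.div_div_eq_div_mul, Nat.mul_add_div hb, Nat.div_eq_of_lt (hc 0),
        Nat.add_zero, ih (fun j => c (j + 1)) fun j => hc _]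
      simp only [Nat.add_lt_add_iff_right]

theorem Nat.div_pow_mod_eq_zero_of_le {b n a : ℕ} (hb : 1 < b) (h : n ≤ a) :
    n / b ^ a % b = 0 := by
  rw [Nat.div_eq_of_lt (h.trans_lt (Nat.lt_pow_self hb)), Nat.zero_mod]

theorem Finset.sum_range_mul_eq_sum_div_mod {M : Type*} [AddCommMonoid M] (n d : ℕ) [NeZero d]
    (g : Fin d → ℕ → M) :
    ∑ j ∈ range (n * d), g (Fin.ofNat d j) (j / d) = ∑ r, ∑ a ∈ range n, g r a := by
  have hd : 0 < d := NeZero.pos d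
  rw [Finset.sum_range, ← finProdFinEquiv.sum_comp, Fintype.sum_prod_type, Finset.sum_comm]
  refine Finset.sum_congr rfl fun r _ => ?_
  rw [Finset.sum_range]
  refine Finset.sum_congr rfl fun a _ => ?_
  have hdiv : ((r : ℕ) + d * a) / d = a := by
    rw [Nat.add_mul_div_left _ _ hd, Nat.div_eq_of_lt r.2, Nat.zero_add]
  have hmod : Fin.ofNat d ((r : ℕ) + d * a) = r :=
    Fin.ext (by rw [Fin.val_ofNat, Nat.add_mul_mod_self_left, Nat.mod_eq_of_lt r.2])
  simp only [finProdFinEquiv_apply_val, hdiv, hmod]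

namespace Paper

section

variable {b d : ℕ}

theorem bdigit_succ_eq_digits [NeZero b] (x : ℝ) (i : ℕ) :
    bdigit b x (i + 1) = Real.digits x b i := by
  rw [bdigit, Real.digits, Fin.val_ofNat, Int.floor_toNat]

theorem interlaceR_eq_ofDigits [NeZero b] [NeZero d] (x : Fin d → ℝ) :
    interlaceR b d x = Real.ofDigits fun j => Real.digits (x (Fin.ofNat d j)) b (j / d) := by
  set e : ℕ → Fin b := fun j => Real.digits (x (Fin.ofNat d j)) b (j / d)
  have hs : Summable fun p => Real.ofDigitsTerm e ((Nat.divModEquiv d).symm p) :=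
    (Nat.divModEquiv d).symm.summable_iff.mpr Real.summable_ofDigitsTerm
  rw [Real.ofDigits, ← (Nat.divModEquiv d).symm.tsum_eq, hs.tsum_prod' fun _ => .of_finite,
    interlaceR]
  refine tsum_congr fun a => ?_
  rw [tsum_fintype]
  refine Finset.sum_congr rfl fun r _ => ?_
  have hdiv : (a * d + r) / d = a := by
    rw [Nat.add_comm, Nat.add_mul_div_right _ _ (NeZero.pos d), Nat.div_eq_of_lt r.2,
      Nat.zero_add]
  have hmod : Fin.ofNat d (a * d + r) = r :=
    Fin.ext (by rw [Fin.val_ofNat, Nat.mul_add_mod_of_lt r.2])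
  simp only [Nat.divModEquiv_symm_apply, Real.ofDigitsTerm, e, hdiv, hmod, bdigit_succ_eq_digits]
  rw [div_eq_mul_inv, Nat.add_right_comm, Nat.add_comm (r : ℕ)]

theorem bdigit_interlaceR [NeZero d] (hb : 1 < b) {x : Fin d → ℝ} (hx : ∀ r, x r ∈ Ico 0 1)
    (j : ℕ) : bdigit b (interlaceR b d x) (j + 1) = bdigit b (x (Fin.ofNat d j)) (j / d + 1) := by
  have : NeZero b := ⟨by omega⟩
  rw [interlaceR_eq_ofDigits, bdigit_succ_eq_digits, bdigit_succ_eq_digits,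
    Real.digits_ofDigits hb]
  intro N
  obtain ⟨a, ha, hlt⟩ := Real.exists_digits_lt_pred hb (hx 0) N
  refine ⟨a * d, ha.trans (Nat.le_mul_of_pos_right a (NeZero.pos d)), ?_⟩
  have hmod : Fin.ofNat d (a * d) = 0 := Fin.ext (by simp)
  rwa [hmod, Nat.mul_div_cancel a (NeZero.pos d)]

theorem interlaceN_eq_sum_range (hb : 1 < b) [NeZero d] (k : Fin d → ℕ) {n : ℕ}
    (hn : ∀ r, k r ≤ n) :
    interlaceN b d k =
      ∑ j ∈ Finset.range (n * d), k (Fin.ofNat d j) / b ^ (j / d) % b * b ^ j := by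
  have hj : ∀ j, b ^ j = b ^ ((Fin.ofNat d j : ℕ) + j / d * d) := fun j => by
    rw [Fin.val_ofNat, Nat.mod_add_div']
  rw [Finset.sum_congr rfl fun j _ => by rw [hj j],
    Finset.sum_range_mul_eq_sum_div_mod n d fun r a => k r / b ^ a % b * b ^ ((r : ℕ) + a * d),
    interlaceN]
  refine Finset.sum_congr rfl fun r _ => Finset.sum_subset (Finset.range_subset_range.mpr (hn r))
    fun a _ ha => ?_
  rw [Nat.div_pow_mod_eq_zero_of_le hb (by simpa using ha), Nat.zero_mul]

theorem interlaceN_div_pow_mod (hb : 1 < b) [NeZero d] (k : Fin d → ℕ) (j : ℕ) :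
    interlaceN b d k / b ^ j % b = k (Fin.ofNat d j) / b ^ (j / d) % b := by
  have hk : ∀ r, k r ≤ ∑ r, k r := fun r => Finset.single_le_sum (by simp) (Finset.mem_univ r)
  rw [interlaceN_eq_sum_range hb k hk,
    Nat.sum_mul_pow_div_pow_mod _ (fun _ => Nat.mod_lt _ (by omega))]
  split_ifs with hj
  · rfl
  · refine (Nat.div_pow_mod_eq_zero_of_le hb ((hk _).trans ?_)).symm
    exact (Nat.le_div_iff_mul_le (NeZero.pos d)).mpr (by omega)

theorem wal_eq_pow_sum_range (hb : 1 < b) {k n : ℕ} (hk : k ≤ n) (x : ℝ) :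
    wal b k x = Complex.exp (2 * Real.pi * Complex.I / b) ^
      ∑ j ∈ Finset.range n, bdigit b x (j + 1) * (k / b ^ j % b) := by
  rw [wal, Finset.sum_subset (Finset.range_subset_range.mpr hk) fun j _ hj => ?_]
  rw [Nat.div_pow_mod_eq_zero_of_le hb (by simpa using hj), Nat.mul_zero]

end

/-- Walsh functions and the digit interlacing function. -/
theorem statement4 (b d : ℕ) (hb : 2 ≤ b) (hd : 1 ≤ d) (k : Fin d → ℕ) (x : Fin d → ℝ)
    (hx : ∀ r, x r ∈ Set.Ico (0 : ℝ) 1) :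
    wal b (interlaceN b d k) (interlaceR b d x) = ∏ r, wal b (k r) (x r) := by
  have : NeZero d := ⟨by omega⟩
  set n := interlaceN b d k + ∑ r, k r
  have hK : interlaceN b d k ≤ n * d := (Nat.le_add_right _ _).trans (Nat.le_mul_of_pos_right n hd)
  have hk : ∀ r, k r ≤ n := fun r =>
    (Finset.single_le_sum (by simp) (Finset.mem_univ r)).trans (Nat.le_add_left _ _)
  rw [wal_eq_pow_sum_range hb hK,
    Finset.prod_congr rfl fun r _ => wal_eq_pow_sum_range hb (hk r) (x r),
    Finset.prod_pow_eq_pow_sum]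
  congr 1
  simp only [bdigit_interlaceR hb hx, interlaceN_div_pow_mod hb]
  exact Finset.sum_range_mul_eq_sum_div_mod n d fun r a =>
    bdigit b (x r) (a + 1) * (k r / b ^ a % b)

end Paper
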